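/- Let P be a finite poset, r \ge 2 an integer, and P_r = P \times Q_{r-1} with the product order, where Q_{r-1} = {1, ..., r-1} is a chain. If every minimal element w of the poset T(P_r) satisfies w(-\infty) = rank \hat{P_r}, then every minimal element v of the poset T(P) satisfies v(-\infty) = rank \hat{P}. (That is, if the generalized Hibi ring R_r(P) = R[I(P_r)] is level, then the Hibi ring R[I(P)] is level.) -/

import Mathlib

open Classical

/-- `Hat P` is the poset `P` with a new least element `-∞ = ⊥` and a new
greatest element `∞ = ⊤` adjoined. -/
abbrev Hat (P : Type*) := WithBot (WithTop P)

/-- The canonical inclusion of `P` into `Hat P`. -/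
def toHat {P : Type*} (x : P) : Hat P := ((x : WithTop P) : WithBot (WithTop P))

/-- The rank of a poset: the maximal length (number of covering steps) of a
chain, encoded as the maximal `n` admitting a strictly increasing sequence of
`n + 1` elements. -/
noncomputable def rankN (Q : Type*) [Preorder Q] : ℕ :=
  sSup {n : ℕ | ∃ f : Fin (n + 1) → Q, StrictMono f}

/-- The height of `x` in a poset `Q`: the rank of the subposet `{y | y ≤ x}`. -/
noncomputable def heightN {Q : Type*} [Preorder Q] (x : Q) : ℕ :=
  sSup {n : ℕ | ∃ f : Fin (n + 1) → Q, StrictMono f ∧ ∀ i, f i ≤ x}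

/-- The depth of `x` in a poset `Q`: the rank of the subposet `{y | x ≤ y}`. -/
noncomputable def depthN {Q : Type*} [Preorder Q] (x : Q) : ℕ :=
  sSup {n : ℕ | ∃ f : Fin (n + 1) → Q, StrictMono f ∧ ∀ i, x ≤ f i}

/-- `v` belongs to `S(P)`: `v : Hat P → ℕ` is order-reversing with `v ∞ = 0`. -/
def memS (P : Type*) [PartialOrder P] (v : Hat P → ℕ) : Prop :=
  v ⊤ = 0 ∧ ∀ p q : Hat P, p ≤ q → v q ≤ v p

/-- `v` belongs to `T(P)`: `v : Hat P → ℕ` is strictly order-reversing with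
`v ∞ = 0`. -/
def memT (P : Type*) [PartialOrder P] (v : Hat P → ℕ) : Prop :=
  v ⊤ = 0 ∧ ∀ p q : Hat P, p < q → v q < v p

/-- The partial order of `T(P)`: `v ≥ w` iff `v` dominates `w` pointwise and the
pointwise difference `v - w` is order-reversing. -/
def Tge (P : Type*) [PartialOrder P] (v w : Hat P → ℕ) : Prop :=
  (∀ p : Hat P, w p ≤ v p) ∧ ∀ p q : Hat P, p ≤ q → v q - w q ≤ v p - w p

/-- `v` is a minimal element of the poset `T(P)`. -/
def IsMinT (P : Type*) [PartialOrder P] (v : Hat P → ℕ) : Prop :=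
  memT P v ∧ ∀ w : Hat P → ℕ, memT P w → Tge P v w → w = v

/-- A poset is pure if all its maximal chains have the same length, equivalently
the same cardinality. -/
def IsPure (P : Type*) [PartialOrder P] : Prop :=
  ∀ C D : Set P, IsMaxChain (· ≤ ·) C → IsMaxChain (· ≤ ·) D → C.ncard = D.ncard

/-!
Write `Q_{r-1} = Fin (n + 1)`. A minimal `v ∈ T(P)` lifts to `w ∈ T(P × Q_{r-1})` with
`w (p, j) = v p + (n - j)` and `w (-∞) = v (-∞) + n`; choose a minimal `w' ≤ w`. For nonempty `P`
the column `-∞ < (p, 0) < ⋯ < (p, n)` forces `w' (-∞) ≥ w' (p, n) + n + 1`, so restricting `w'`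
to the top layer `P × {n}` and lowering its value at `-∞` by `n` gives an element of `T(P)`
below `v`. By minimality it is `v`, whence `w' (-∞) = v (-∞) + n`. Levelness gives
`w' (-∞) = rank (P × Q_{r-1})̂`, and lifting the depth function of `P̂` shows that this rank is at
most `rank P̂ + n`; so `v (-∞) ≤ rank P̂`, while `rank P̂ ≤ u (-∞)` for every `u ∈ T(P)`.
For empty `P`, the depth function of `P̂` is the least element of `T(P)`.
-/

section Chains

variable {A : Type*} [Preorder A]

lemma StrictAnti.add_le_of_strictMono {φ : A → ℕ} (hφ : StrictAnti φ) {n : ℕ}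
    {f : Fin (n + 1) → A} (hf : StrictMono f) : φ (f (Fin.last n)) + n ≤ φ (f 0) := by
  induction n with
  | zero => rfl
  | succ n ih =>
    have h_init := ih (hf.comp (Fin.strictMono_castSucc (n := n + 1)))
    have h_last := hφ (hf (Fin.castSucc_lt_last (Fin.last n)))
    simp only [Function.comp_apply, Fin.castSucc_zero] at h_init h_last
    omega

lemma rankN_le_of_strictAnti {φ : A → ℕ} (hφ : StrictAnti φ) {N : ℕ} (hN : ∀ a, φ a ≤ N) :
    rankN A ≤ N :=
  csSup_le' fun _ ⟨_, hf⟩ => (le_add_self.trans (hφ.add_le_of_strictMono hf)).trans (hN _)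

section Depth

variable [Finite A]

lemma StrictMono.lt_natCard {n : ℕ} {f : Fin (n + 1) → A} (hf : StrictMono f) :
    n < Nat.card A := by
  simpa using Nat.card_le_card_of_injective f hf.injective

lemma bddAbove_depthN_set (x : A) :
    BddAbove {n : ℕ | ∃ f : Fin (n + 1) → A, StrictMono f ∧ ∀ i, x ≤ f i} :=
  ⟨Nat.card A, fun _ ⟨_, hf, _⟩ => hf.lt_natCard.le⟩

lemma le_depthN {x : A} {n : ℕ} {f : Fin (n + 1) → A} (hf : StrictMono f) (hx : ∀ i, x ≤ f i) :
    n ≤ depthN x :=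
  le_csSup (bddAbove_depthN_set x) ⟨f, hf, hx⟩

lemma exists_strictMono_depthN (x : A) :
    ∃ f : Fin (depthN x + 1) → A, StrictMono f ∧ ∀ i, x ≤ f i :=
  Nat.sSup_mem ⟨0, Set.mem_ofPred.2
    ⟨fun _ => x, fun i j h => absurd h (@Subsingleton.elim (Fin 1) _ i j).not_lt, fun _ => le_rfl⟩⟩
    (bddAbove_depthN_set x)

lemma depthN_strictAnti : StrictAnti (depthN : A → ℕ) := by
  intro x y hxy
  obtain ⟨f, hf, hyf⟩ := exists_strictMono_depthN y
  exact le_depthN (strictMono_vecCons.2 ⟨hxy.trans_le (hyf 0), hf⟩)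
    (Fin.cases le_rfl fun i => by simpa using hxy.le.trans (hyf i))

end Depth

lemma depthN_bot [OrderBot A] : depthN (⊥ : A) = rankN A := by
  simp [depthN, rankN]

end Chains

lemma depthN_top {A : Type*} [PartialOrder A] [OrderTop A] : depthN (⊤ : A) = 0 := by
  refine Nat.eq_zero_of_le_zero (csSup_le' ?_)
  rintro n ⟨f, hf, hf_top⟩
  simpa using
    hf.injective ((top_le_iff.1 (hf_top (Fin.last n))).trans (top_le_iff.1 (hf_top 0)).symm)

lemma StrictAnti.fst_add_snd {B : Type*} [PartialOrder B] {C : Type*} [PartialOrder C]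
    {f : B → ℕ} {g : C → ℕ} (hf : StrictAnti f) (hg : StrictAnti g) :
    StrictAnti fun x : B × C => f x.1 + g x.2 := by
  rintro ⟨b, c⟩ ⟨b', c'⟩ h
  rcases Prod.lt_iff.1 h with ⟨hb, hc⟩ | ⟨hb, hc⟩
  · exact add_lt_add_of_lt_of_le (hf hb) (hg.antitone hc)
  · exact add_lt_add_of_le_of_lt (hf.antitone hb) (hg hc)

section Hat

variable {P : Type*}

@[elab_as_elim]
lemma Hat.induction {motive : Hat P → Prop} (bot : motive ⊥) (top : motive ⊤)
    (coe : ∀ p, motive (toHat p)) (x : Hat P) : motive x := by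
  induction x using WithBot.recBotCoe with
  | bot => exact bot
  | coe y => induction y using WithTop.recTopCoe with
    | top => exact top
    | coe p => exact coe p

lemma Hat.eq_bot_or_eq_top [IsEmpty P] (x : Hat P) : x = ⊥ ∨ x = ⊤ := by
  induction x using Hat.induction with
  | bot => exact Or.inl rfl
  | top => exact Or.inr rfl
  | coe p => exact isEmptyElim p

@[simp] lemma toHat_ne_bot (p : P) : toHat p ≠ ⊥ := WithBot.coe_ne_bot

variable [Preorder P]

@[simp] lemma bot_lt_toHat (p : P) : ⊥ < toHat p := WithBot.bot_lt_coe _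

@[simp] lemma Hat.bot_lt_top : (⊥ : Hat P) < ⊤ := WithBot.bot_lt_coe _

@[simp] lemma toHat_lt_top (p : P) : toHat p < ⊤ := WithBot.coe_lt_coe.2 (WithTop.coe_lt_top p)

@[simp] lemma toHat_lt_toHat {p q : P} : toHat p < toHat q ↔ p < q := by simp [toHat]

@[simp] lemma toHat_le_toHat {p q : P} : toHat p ≤ toHat q ↔ p ≤ q := by simp [toHat]

end Hat

section Tge

variable {Q : Type*} [PartialOrder Q]

lemma memT.strictAnti {v : Hat Q → ℕ} (hv : memT Q v) : StrictAnti v := hv.2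

lemma Tge.refl (v : Hat Q → ℕ) : Tge Q v v :=
  ⟨fun _ => le_rfl, fun _ _ _ => by simp⟩

lemma Tge.trans {u v w : Hat Q → ℕ} (huv : Tge Q u v) (hvw : Tge Q v w) : Tge Q u w := by
  refine ⟨fun p => (hvw.1 p).trans (huv.1 p), fun p q hpq => ?_⟩
  have := huv.2 p q hpq; have := hvw.2 p q hpq
  have := huv.1 p; have := hvw.1 p; have := huv.1 q; have := hvw.1 q
  omega

lemma exists_isMinT_tge [Finite Q] {v : Hat Q → ℕ} (hv : memT Q v) :
    ∃ w, IsMinT Q w ∧ Tge Q v w := by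
  obtain ⟨w, ⟨hw, hvw⟩, hmin⟩ :=
    exists_minimal_of_wellFoundedLT (fun w => memT Q w ∧ Tge Q v w) ⟨v, hv, Tge.refl v⟩
  exact ⟨w, ⟨hw, fun z hz hwz => le_antisymm hwz.1 (hmin ⟨hz, hvw.trans hwz⟩ hwz.1)⟩, hvw⟩

lemma rankN_hat_le_bot {v : Hat Q → ℕ} (hv : memT Q v) : rankN (Hat Q) ≤ v ⊥ :=
  rankN_le_of_strictAnti hv.strictAnti fun _ => hv.strictAnti.antitone bot_le

lemma memT_depthN [Finite Q] : memT Q depthN :=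
  ⟨depthN_top, depthN_strictAnti⟩

lemma tge_of_isEmpty [IsEmpty Q] {u v : Hat Q → ℕ} (hu : memT Q u) (hv : memT Q v)
    (h : u ⊥ ≤ v ⊥) : Tge Q v u := by
  refine ⟨fun x => ?_, fun x y hxy => ?_⟩
  · rcases x.eq_bot_or_eq_top with rfl | rfl
    · exact h
    · rw [hu.1, hv.1]
  · rcases y.eq_bot_or_eq_top with rfl | rfl
    · rw [le_bot_iff.1 hxy]
    · simp [hu.1, hv.1]

lemma IsMinT.bot_eq_rankN_of_isEmpty [IsEmpty Q] {v : Hat Q → ℕ} (hv : IsMinT Q v) :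
    v ⊥ = rankN (Hat Q) := by
  have h_depth := hv.2 depthN memT_depthN
    (tge_of_isEmpty memT_depthN hv.1 (depthN_bot.trans_le (rankN_hat_le_bot hv.1)))
  rw [← h_depth, depthN_bot]

end Tge

section Layers

section SplitProd

variable {P Q : Type*} [Preorder Q] [BoundedOrder Q]

def Hat.splitProd : Hat (P × Q) → Hat P × Q :=
  WithBot.recBotCoe (⊥, ⊥) (WithTop.recTopCoe (⊤, ⊤) fun x => (toHat x.1, x.2))

@[simp] lemma Hat.splitProd_bot : Hat.splitProd (⊥ : Hat (P × Q)) = (⊥, ⊥) := rfl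

@[simp] lemma Hat.splitProd_top : Hat.splitProd (⊤ : Hat (P × Q)) = (⊤, ⊤) := rfl

@[simp] lemma Hat.splitProd_toHat (x : P × Q) : Hat.splitProd (toHat x) = (toHat x.1, x.2) := rfl

lemma Hat.strictMono_splitProd [Preorder P] :
    StrictMono (Hat.splitProd : Hat (P × Q) → Hat P × Q) := by
  intro x y hxy
  induction x using Hat.induction <;> induction y using Hat.induction <;>
    simp_all [Prod.lt_iff]

end SplitProd

variable {P : Type*}

def liftT (n : ℕ) (v : Hat P → ℕ) (x : Hat (P × Fin (n + 1))) : ℕ :=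
  v (Hat.splitProd x).1 + (n - (Hat.splitProd x).2)

lemma liftT_bot (n : ℕ) (v : Hat P → ℕ) : liftT n v ⊥ = v ⊥ + n := by
  simp [liftT, bot_eq_zero]

variable [PartialOrder P]

lemma memT_liftT {v : Hat P → ℕ} (hv : memT P v) (n : ℕ) :
    memT (P × Fin (n + 1)) (liftT n v) := by
  have h_layer : StrictAnti fun i : Fin (n + 1) => n - (i : ℕ) := fun i j hij =>
    Nat.sub_lt_sub_left ((Fin.lt_def.1 hij).trans_le (Nat.le_of_lt_succ j.is_lt)) hij
  exact ⟨by simp [liftT, hv.1],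
    (hv.strictAnti.fst_add_snd h_layer).comp_strictMono Hat.strictMono_splitProd⟩

lemma rankN_hat_prod_fin_le [Finite P] (n : ℕ) :
    rankN (Hat (P × Fin (n + 1))) ≤ rankN (Hat P) + n := by
  simpa [liftT_bot, depthN_bot] using rankN_hat_le_bot (memT_liftT (memT_depthN (Q := P)) n)

end Layers

section LastLayer

variable {P : Type*} {n : ℕ}

def Hat.lastLayer (n : ℕ) : Hat P → Hat (P × Fin (n + 1)) :=
  WithBot.map (WithTop.map (·, Fin.last n))

@[simp] lemma Hat.lastLayer_bot : Hat.lastLayer n (⊥ : Hat P) = ⊥ := rfl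

@[simp] lemma Hat.lastLayer_top : Hat.lastLayer n (⊤ : Hat P) = ⊤ := rfl

@[simp] lemma Hat.lastLayer_toHat (p : P) : Hat.lastLayer n (toHat p) = toHat (p, Fin.last n) :=
  rfl

lemma Hat.strictMono_lastLayer [Preorder P] :
    StrictMono (Hat.lastLayer n : Hat P → Hat (P × Fin (n + 1))) :=
  StrictMono.withBot_map (StrictMono.withTop_map fun _ _ h => Prod.mk_lt_mk_iff_left.2 h)

lemma liftT_lastLayer (v : Hat P → ℕ) {x : Hat P} (hx : x ≠ ⊥) :
    liftT n v (Hat.lastLayer n x) = v x := by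
  induction x using Hat.induction with
  | bot => exact absurd rfl hx
  | top => simp [liftT]
  | coe p => simp [liftT]

noncomputable def restrictLastLayer (n : ℕ) (w : Hat (P × Fin (n + 1)) → ℕ) (x : Hat P) : ℕ :=
  if x = ⊥ then w ⊥ - n else w (Hat.lastLayer n x)

variable [PartialOrder P]

variable {w : Hat (P × Fin (n + 1)) → ℕ}

lemma memT.add_le_bot_of_lastLayer (hw : memT (P × Fin (n + 1)) w) (p : P) :
    w (Hat.lastLayer n (toHat p)) + (n + 1) ≤ w ⊥ := by
  have h_col : StrictMono (Matrix.vecCons ⊥ fun j : Fin (n + 1) => toHat (p, j)) :=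
    strictMono_vecCons.2
      ⟨bot_lt_toHat _, fun _ _ h => toHat_lt_toHat.2 (Prod.mk_lt_mk_iff_right.2 h)⟩
  simpa [← Fin.succ_last] using hw.strictAnti.add_le_of_strictMono h_col

lemma memT_restrictLastLayer [Nonempty P] (hw : memT (P × Fin (n + 1)) w) :
    memT P (restrictLastLayer n w) := by
  obtain ⟨p₀⟩ := ‹Nonempty P›
  refine ⟨by simp [restrictLastLayer, hw.1], fun x y hxy => ?_⟩
  have hy : y ≠ ⊥ := hxy.ne_bot
  by_cases hx : x = ⊥
  · subst hx
    induction y using Hat.induction with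
    | bot => exact absurd rfl hy
    | top =>
      have := hw.add_le_bot_of_lastLayer p₀
      simp [restrictLastLayer, hw.1]
      omega
    | coe q =>
      have := hw.add_le_bot_of_lastLayer q
      simp only [restrictLastLayer, if_pos, toHat_ne_bot, if_false, Hat.lastLayer_toHat] at this ⊢
      omega
  · simpa [restrictLastLayer, hx, hy] using hw.2 _ _ (Hat.strictMono_lastLayer hxy)

lemma tge_restrictLastLayer [Nonempty P] (hw : memT (P × Fin (n + 1)) w) {v : Hat P → ℕ}
    (hvw : Tge (P × Fin (n + 1)) (liftT n v) w) : Tge P v (restrictLastLayer n w) := by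
  obtain ⟨p₀⟩ := ‹Nonempty P›
  have h_bot := hw.add_le_bot_of_lastLayer p₀
  have h_diff (x : Hat P) : v x - restrictLastLayer n w x =
      liftT n v (Hat.lastLayer n x) - w (Hat.lastLayer n x) := by
    by_cases hx : x = ⊥
    · subst hx
      simp [restrictLastLayer, liftT_bot]
      omega
    · simp [restrictLastLayer, hx, liftT_lastLayer v hx]
  refine ⟨fun x => ?_, fun x y hxy => ?_⟩
  · have h_le := hvw.1 (Hat.lastLayer n x)
    by_cases hx : x = ⊥
    · subst hx
      simp [restrictLastLayer, liftT_bot] at h_le ⊢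
      omega
    · simpa [restrictLastLayer, hx, liftT_lastLayer v hx] using h_le
  · rw [h_diff, h_diff]
    exact hvw.2 _ _ (Hat.strictMono_lastLayer.monotone hxy)

lemma IsMinT.bot_add_eq_of_tge_liftT [Nonempty P] {v : Hat P → ℕ} (hv : IsMinT P v)
    (hw : memT (P × Fin (n + 1)) w) (hvw : Tge (P × Fin (n + 1)) (liftT n v) w) :
    w ⊥ = v ⊥ + n := by
  obtain ⟨p₀⟩ := ‹Nonempty P›
  have h_bot := hw.add_le_bot_of_lastLayer p₀
  have h_eq := congrFun (hv.2 _ (memT_restrictLastLayer hw) (tge_restrictLastLayer hw hvw)) ⊥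
  simp only [restrictLastLayer, if_true] at h_eq
  omega

end LastLayer

/-- **Levelness descends from generalized Hibi rings.** If every minimal
element `w` of `T(P × Q_{r-1})` satisfies `w(-∞) = rank (Hat (P × Q_{r-1}))`
(i.e. the generalized Hibi ring `R_r(P)` is level), then every minimal element
`v` of `T(P)` satisfies `v(-∞) = rank (Hat P)` (i.e. `R[I(P)]` is level). -/
theorem level_of_generalized_level (P : Type*) [Fintype P] [PartialOrder P]
    (r : ℕ) (hr : 2 ≤ r)
    (h : ∀ w : Hat (P × Fin (r - 1)) → ℕ, IsMinT (P × Fin (r - 1)) w →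
      w ⊥ = rankN (Hat (P × Fin (r - 1)))) :
    ∀ v : Hat P → ℕ, IsMinT P v → v ⊥ = rankN (Hat P) := by
  intro v hv
  rcases isEmpty_or_nonempty P with hP | hP
  · exact hv.bot_eq_rankN_of_isEmpty
  obtain ⟨n, rfl⟩ : ∃ n, r = n + 2 := ⟨r - 2, by omega⟩
  obtain ⟨w, hw, hvw⟩ := exists_isMinT_tge (memT_liftT hv.1 n)
  have h_level : w ⊥ = rankN (Hat (P × Fin (n + 1))) := h w hw
  have h_lift : w ⊥ = v ⊥ + n := hv.bot_add_eq_of_tge_liftT hw.1 hvw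
  have h_rank := rankN_hat_prod_fin_le (P := P) n
  have h_lower := rankN_hat_le_bot hv.1
  omega
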